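/- arXiv:2602.15455 — 3 statements merged into one kernel-verified Lean document; each statement's English description precedes it below -/
import Mathlib

section
/- Let k ≥ 2 be a fixed integer. For each n > k, let (x^{(n)}_m)_{m≥0} be the k-averaging process on ℝ^n started from the initial vector x_0 = (1, 0, …, 0), and set T_n(m) = ∑_{i=1}^n |x^{(n)}_{m,i} − 1/n|. Then for any fixed real number θ with 0 < θ < 1/(k log k), the random variables T_n(⌊θ n log n⌋) converge to 2 in probability as n → ∞. -/
open MeasureTheory ProbabilityTheory Filter

noncomputable section

instance (α : Type*) : MeasurableSpace (Finset α) := ⊤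

/-- One averaging step: replace all coordinates in `A` by their average. -/
def avgStep {n : ℕ} (k : ℕ) (A : Finset (Fin n)) (x : Fin n → ℝ) : Fin n → ℝ :=
  fun i => if i ∈ A then (∑ j ∈ A, x j) / k else x i

/-- The `k`-averaging process driven by the sequence of chosen subsets `A · ω`. -/
def proc {Ω : Type*} {n : ℕ} (k : ℕ) (x0 : Fin n → ℝ) (A : ℕ → Ω → Finset (Fin n))
    (ω : Ω) : ℕ → Fin n → ℝ
  | 0 => x0
  | m + 1 => avgStep k (A m ω) (proc k x0 A ω m)

/-!
For `0 < p < 1` let `Φ_p(x) = ∑ᵢ |xᵢ| ^ p` (`rpowSum`). Averaging `k` coordinates multiplies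
their contribution to `Φ_p` by at most `k ^ (1 - p)` (subadditivity of `t ↦ t ^ p`), and each
coordinate is averaged with probability `k / n` independently of the past, so
`𝔼 Φ_p(x_m) ≤ (1 + (k ^ (1 - p) - 1) k / n) ^ m ≤ n ^ (θ k (k ^ (1 - p) - 1))`
at `m = ⌊θ n log n⌋`. Conversely, a probability vector has at most `1 / a` coordinates above
`a = n ^ (-γ)`, so if `T ≤ 2 - ε` it carries mass about `ε` below `a`, which forces
`Φ_p ≳ ε a ^ (p - 1) = ε n ^ (γ (1 - p))`. As `(k ^ q - 1) / q → log k` when `q → 0⁺`, the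
hypothesis `θ k log k < 1` leaves room for `γ < 1` and `q = 1 - p` with
`θ k (k ^ q - 1) < γ q`, and Markov's inequality for `Φ_p` concludes.
-/

instance (α : Type*) : DiscreteMeasurableSpace (Finset α) :=
  ⟨fun _ => MeasurableSpace.measurableSet_top⟩

open Finset Real Topology
open scoped ENNReal

lemma Real.rpow_sum_le_sum_rpow {ι : Type*} (s : Finset ι) {f : ι → ℝ} (hf : ∀ i ∈ s, 0 ≤ f i)
    {p : ℝ} (hp0 : 0 < p) (hp1 : p ≤ 1) :
    (∑ i ∈ s, f i) ^ p ≤ ∑ i ∈ s, f i ^ p :=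
  le_sum_of_subadditive_on_pred (· ^ p) (0 ≤ ·) (zero_rpow hp0.ne').le
    (fun _ _ hx hy => rpow_add_le_add_rpow hx hy hp0.le hp1) (fun _ _ => add_nonneg) f hf

def rpowSum {ι : Type*} [Fintype ι] (p : ℝ) (x : ι → ℝ) : ℝ :=
  ∑ i, |x i| ^ p

lemma rpowSum_nonneg {ι : Type*} [Fintype ι] (p : ℝ) (x : ι → ℝ) : 0 ≤ rpowSum p x :=
  sum_nonneg fun _ _ => rpow_nonneg (abs_nonneg _) p

lemma rpowSum_single {ι : Type*} [Fintype ι] [DecidableEq ι] {p : ℝ} (hp : p ≠ 0) (i : ι) :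
    rpowSum p (Pi.single i 1) = 1 := by
  rw [rpowSum, sum_eq_single i (fun j _ hj => by simp [hj, zero_rpow hp]) (by simp)]
  simp

lemma measurable_rpow_abs {ι : Type*} (p : ℝ) : Measurable fun (x : ι → ℝ) i => |x i| ^ p :=
  measurable_pi_lambda _ fun i => (measurable_pi_apply i).abs.pow_const p

section AveragingStep

variable {n k : ℕ} {s : Finset (Fin n)}

lemma avgStep_of_mem {i : Fin n} (hi : i ∈ s) (x : Fin n → ℝ) :
    avgStep k s x i = (∑ j ∈ s, x j) / k := if_pos hi

lemma avgStep_of_notMem {i : Fin n} (hi : i ∉ s) (x : Fin n → ℝ) :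
    avgStep k s x i = x i := if_neg hi

lemma sum_avgStep (hk : 0 < k) (hs : #s = k) (x : Fin n → ℝ) :
    ∑ i, avgStep k s x i = ∑ i, x i := by
  rw [← sum_add_sum_compl s, ← sum_add_sum_compl s x, sum_congr rfl fun i hi => avgStep_of_mem hi x,
    sum_congr rfl fun i hi => avgStep_of_notMem (mem_compl.1 hi) x, sum_const, hs, nsmul_eq_mul,
    mul_div_cancel₀ _ (by positivity)]

lemma avgStep_mem_stdSimplex (hk : 0 < k) (hs : #s = k) {x : Fin n → ℝ}
    (hx : x ∈ stdSimplex ℝ (Fin n)) : avgStep k s x ∈ stdSimplex ℝ (Fin n) := by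
  refine ⟨fun i => ?_, (sum_avgStep hk hs x).trans hx.2⟩
  unfold avgStep
  split_ifs
  exacts [div_nonneg (sum_nonneg fun j _ => hx.1 j) k.cast_nonneg, hx.1 i]

lemma rpowSum_avgStep_le (hk : 0 < k) (hs : #s = k) (x : Fin n → ℝ) {p : ℝ} (hp0 : 0 < p)
    (hp1 : p ≤ 1) :
    rpowSum p (avgStep k s x) ≤ rpowSum p x + ((k : ℝ) ^ (1 - p) - 1) * ∑ i ∈ s, |x i| ^ p := by
  have hk0 : (0 : ℝ) < k := by exact_mod_cast hk
  have hsub : |∑ j ∈ s, x j| ^ p ≤ ∑ j ∈ s, |x j| ^ p :=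
    (rpow_le_rpow (abs_nonneg _) (abs_sum_le_sum_abs _ _) hp0.le).trans
      (rpow_sum_le_sum_rpow s (fun j _ => abs_nonneg _) hp0 hp1)
  have hin : ∑ i ∈ s, |avgStep k s x i| ^ p ≤ (k : ℝ) ^ (1 - p) * ∑ i ∈ s, |x i| ^ p := by
    calc ∑ i ∈ s, |avgStep k s x i| ^ p = k * (|∑ j ∈ s, x j| ^ p / (k : ℝ) ^ p) := by
          rw [sum_congr rfl fun i hi => by rw [avgStep_of_mem hi, abs_div, Nat.abs_cast,
            div_rpow (abs_nonneg _) hk0.le], sum_const, hs, nsmul_eq_mul]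
      _ ≤ k * ((∑ j ∈ s, |x j| ^ p) / (k : ℝ) ^ p) := by gcongr
      _ = (k : ℝ) ^ (1 - p) * ∑ i ∈ s, |x i| ^ p := by
          rw [rpow_sub hk0, rpow_one]; ring
  have hout : ∑ i ∈ sᶜ, |avgStep k s x i| ^ p = ∑ i ∈ sᶜ, |x i| ^ p :=
    sum_congr rfl fun i hi => by rw [avgStep_of_notMem (mem_compl.1 hi)]
  simp only [rpowSum, ← sum_add_sum_compl s, hout]
  linarith

end AveragingStep

lemma proc_mem_stdSimplex {Ω : Type*} {n k : ℕ} (hk : 0 < k) {x0 : Fin n → ℝ}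
    (hx0 : x0 ∈ stdSimplex ℝ (Fin n)) {A : ℕ → Ω → Finset (Fin n)} {ω : Ω}
    (hA : ∀ j, #(A j ω) = k) (m : ℕ) : proc k x0 A ω m ∈ stdSimplex ℝ (Fin n) := by
  induction m with
  | zero => exact hx0
  | succ m ih => exact avgStep_mem_stdSimplex hk (hA m) ih

lemma proc_congr {Ω Ω' : Type*} {n k : ℕ} (x0 : Fin n → ℝ) {A : ℕ → Ω → Finset (Fin n)}
    {A' : ℕ → Ω' → Finset (Fin n)} {ω : Ω} {ω' : Ω'} {m : ℕ} (h : ∀ j < m, A j ω = A' j ω') :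
    proc k x0 A ω m = proc k x0 A' ω' m := by
  induction m with
  | zero => rfl
  | succ m ih =>
    simp only [proc, h m m.lt_succ_self, ih fun j hj => h j (hj.trans m.lt_succ_self)]

lemma exists_proc_eq_comp_history {Ω : Type*} {n : ℕ} (k : ℕ) (x0 : Fin n → ℝ)
    (A : ℕ → Ω → Finset (Fin n)) (m : ℕ) :
    ∃ g : (range m → Finset (Fin n)) → Fin n → ℝ, ∀ ω, proc k x0 A ω m = g fun j => A j ω :=
  ⟨fun t => proc k x0 (fun j (t : range m → Finset (Fin n)) =>
      if hj : j ∈ range m then t ⟨j, hj⟩ else ∅) t m,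
    fun ω => proc_congr x0 fun j hj => by simp [mem_range.2 hj]⟩

section Simplex

variable {ι : Type*} [Fintype ι] {x : ι → ℝ}

lemma Fintype.card_pos_of_mem_stdSimplex (hx : x ∈ stdSimplex ℝ ι) : 0 < Fintype.card ι := by
  obtain ⟨i, -, -⟩ := exists_ne_zero_of_sum_ne_zero (hx.2.trans_ne one_ne_zero)
  exact Fintype.card_pos_iff.2 ⟨i⟩

lemma sum_abs_sub_inv_card_le_two (hx : x ∈ stdSimplex ℝ ι) :
    ∑ i, |x i - 1 / Fintype.card ι| ≤ 2 := by
  have hN : (Fintype.card ι : ℝ) ≠ 0 := by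
    exact_mod_cast (Fintype.card_pos_of_mem_stdSimplex hx).ne'
  calc ∑ i, |x i - 1 / Fintype.card ι| ≤ ∑ i, (x i + 1 / Fintype.card ι) :=
        sum_le_sum fun i _ => (abs_sub _ _).trans (by
          rw [abs_of_nonneg (hx.1 i), abs_of_nonneg (by positivity)])
    _ = 2 := by
        rw [sum_add_distrib, hx.2, sum_const, card_univ, nsmul_eq_mul, mul_one_div_cancel hN]
        norm_num

lemma two_sub_sum_abs_sub_inv_card_le (hx : x ∈ stdSimplex ℝ ι) (a : ℝ) :
    2 - ∑ i, |x i - 1 / Fintype.card ι|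
      ≤ 2 * ∑ i with x i < a, x i + 2 * (#{i | a ≤ x i} / Fintype.card ι) := by
  have hN : (Fintype.card ι : ℝ) ≠ 0 := by
    exact_mod_cast (Fintype.card_pos_of_mem_stdSimplex hx).ne'
  set N : ℝ := (Fintype.card ι : ℝ)
  have hcard : (#{i | a ≤ x i} : ℝ) + #{i | x i < a} = N := by
    simp only [← not_le]; rw [← Nat.cast_add, card_filter_add_card_filter_not, card_univ]
  have hsum : ∑ i with a ≤ x i, x i + ∑ i with x i < a, x i = 1 := by
    simp only [← not_le]; rw [sum_filter_add_sum_filter_not, hx.2]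
  have hsplit : ∑ i, |x i - 1 / N|
      = ∑ i with a ≤ x i, |x i - 1 / N| + ∑ i with x i < a, |x i - 1 / N| := by
    simp only [← not_le]; rw [sum_filter_add_sum_filter_not]
  have hbig : ∑ i with a ≤ x i, x i - #{i | a ≤ x i} * (1 / N)
      ≤ ∑ i with a ≤ x i, |x i - 1 / N| := by
    rw [← nsmul_eq_mul, ← sum_const, ← sum_sub_distrib]
    exact sum_le_sum fun i _ => le_abs_self _
  have hsmall : #{i | x i < a} * (1 / N) - ∑ i with x i < a, x i
      ≤ ∑ i with x i < a, |x i - 1 / N| := by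
    rw [← nsmul_eq_mul, ← sum_const, ← sum_sub_distrib]
    exact sum_le_sum fun i _ => by rw [abs_sub_comm]; exact le_abs_self _
  have : (#{i | x i < a} : ℝ) * (1 / N) = 1 - #{i | a ≤ x i} / N := by
    field_simp; linarith
  linarith [mul_one_div (#{i | a ≤ x i} : ℝ) N]

lemma card_filter_le_apply_mul_le_one (hx : x ∈ stdSimplex ℝ ι) (a : ℝ) :
    #{i | a ≤ x i} * a ≤ 1 := by
  calc #{i | a ≤ x i} * a = ∑ i with a ≤ x i, a := by rw [sum_const, nsmul_eq_mul]
    _ ≤ ∑ i with a ≤ x i, x i := sum_le_sum fun i hi => (mem_filter.1 hi).2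
    _ ≤ ∑ i, x i := sum_le_sum_of_subset_of_nonneg (filter_subset _ _) fun i _ _ => hx.1 i
    _ = 1 := hx.2

lemma sum_filter_lt_le_rpowSum (hx : ∀ i, 0 ≤ x i) {a p : ℝ} (ha : 0 ≤ a) (hp0 : 0 < p)
    (hp1 : p ≤ 1) :
    ∑ i with x i < a, x i ≤ a ^ (1 - p) * rpowSum p x := by
  have hterm : ∀ i, x i < a → x i ≤ a ^ (1 - p) * |x i| ^ p := fun i hi => by
    rw [abs_of_nonneg (hx i)]
    rcases (hx i).eq_or_lt with h0 | hpos
    · rw [← h0, zero_rpow hp0.ne', mul_zero]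
    · calc x i = x i ^ (1 - p) * x i ^ p := by rw [← rpow_add hpos, sub_add_cancel, rpow_one]
        _ ≤ a ^ (1 - p) * x i ^ p := by gcongr
  rw [rpowSum, mul_sum]
  exact (sum_le_sum fun i hi => hterm i (mem_filter.1 hi).2).trans
    (sum_le_sum_of_subset_of_nonneg (filter_subset _ _) fun i _ _ => by positivity)

lemma two_sub_sum_abs_sub_inv_card_le_rpowSum (hx : x ∈ stdSimplex ℝ ι) {a p : ℝ} (ha : 0 < a)
    (hp0 : 0 < p) (hp1 : p ≤ 1) :
    2 - ∑ i, |x i - 1 / Fintype.card ι|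
      ≤ 2 * a ^ (1 - p) * rpowSum p x + 2 / (a * Fintype.card ι) := by
  have hN : (0 : ℝ) < Fintype.card ι := by exact_mod_cast Fintype.card_pos_of_mem_stdSimplex hx
  have hbig : (#{i | a ≤ x i} : ℝ) / Fintype.card ι ≤ 1 / (a * Fintype.card ι) := by
    rw [div_le_div_iff₀ hN (by positivity)]
    nlinarith [card_filter_le_apply_mul_le_one hx a]
  calc 2 - ∑ i, |x i - 1 / Fintype.card ι|
      ≤ 2 * ∑ i with x i < a, x i + 2 * (#{i | a ≤ x i} / Fintype.card ι) :=
        two_sub_sum_abs_sub_inv_card_le hx a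
    _ ≤ 2 * (a ^ (1 - p) * rpowSum p x) + 2 * (1 / (a * Fintype.card ι)) := by
        gcongr
        exact sum_filter_lt_le_rpowSum hx.1 ha.le hp0 hp1
    _ = 2 * a ^ (1 - p) * rpowSum p x + 2 / (a * Fintype.card ι) := by ring

lemma div_le_rpowSum_of_le_abs_sum_abs_sub_inv_card_sub_two (hx : x ∈ stdSimplex ℝ ι)
    {a p ε : ℝ} (ha : 0 < a) (hp0 : 0 < p) (hp1 : p ≤ 1)
    (hε : 2 / (a * Fintype.card ι) ≤ ε / 2) (h : ε ≤ |∑ i, |x i - 1 / Fintype.card ι| - 2|) :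
    ε / (4 * a ^ (1 - p)) ≤ rpowSum p x := by
  have hle := two_sub_sum_abs_sub_inv_card_le_rpowSum hx ha hp0 hp1
  rw [abs_of_nonpos (by linarith [sum_abs_sub_inv_card_le_two hx])] at h
  rw [div_le_iff₀ (by positivity)]
  linarith

end Simplex

lemma card_filter_mem_and_card_eq {n k : ℕ} (hk : 0 < k) (i : Fin n) :
    #{s : Finset (Fin n) | i ∈ s ∧ #s = k} = (n - 1).choose (k - 1) := by
  have : ({s | i ∈ s ∧ #s = k} : Finset (Finset (Fin n)))
      = {s ∈ powersetCard k (univ : Finset (Fin n)) | {i} ⊆ s} := by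
    ext s; simp [mem_powersetCard, and_comm]
  rw [this, card_filter_powersetCard_subset {i} univ k (subset_univ _)
    (by simpa using hk.nat_succ_le), card_singleton, card_univ, Fintype.card_fin]

lemma eventually_rpow_sub_one_lt_mul {b c : ℝ} (hb : 0 < b) (hc : log b < c) :
    ∀ᶠ q in 𝓝[>] 0, b ^ q - 1 < c * q := by
  have hslope := (hasStrictDerivAt_const_rpow hb 0).hasDerivAt.tendsto_slope_zero_right
  simp only [rpow_zero, one_mul, zero_add, smul_eq_mul] at hslope
  filter_upwards [hslope.eventually (gt_mem_nhds hc), self_mem_nhdsWithin] with q hq hq0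
  rwa [inv_mul_lt_iff₀ hq0, mul_comm q] at hq

lemma one_add_div_pow_floor_le {c θ : ℝ} (hc : 0 ≤ c) (hθ : 0 ≤ θ) {n : ℕ} (hn : 0 < n) :
    (1 + c / n) ^ ⌊θ * n * log n⌋₊ ≤ (n : ℝ) ^ (θ * c) := by
  have hn' : (0 : ℝ) < n := by exact_mod_cast hn
  calc (1 + c / n) ^ ⌊θ * n * log n⌋₊ ≤ exp (c / n) ^ ⌊θ * n * log n⌋₊ := by
        gcongr; linarith [add_one_le_exp (c / n)]
    _ = exp (⌊θ * n * log n⌋₊ * (c / n)) := by rw [← exp_nat_mul]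
    _ ≤ exp (θ * n * log n * (c / n)) := by
        gcongr; exact Nat.floor_le (by have := log_natCast_nonneg n; positivity)
    _ = (n : ℝ) ^ (θ * c) := by
        rw [rpow_def_of_pos hn']; congr 1; field_simp

lemma exists_cutoff_exponents {b θ : ℝ} (hb : 1 < b) (hθ : 0 < θ) (h : θ * b * log b < 1) :
    ∃ γ q, γ < 1 ∧ 0 < q ∧ q < 1 ∧ θ * ((b ^ q - 1) * b) < γ * q := by
  have hθb : 0 < θ * b := by positivity
  obtain ⟨γ, hγ, hγ1⟩ := exists_between h
  obtain ⟨q, hbq, hq0, hq1⟩ : ∃ q, b ^ q - 1 < γ / (θ * b) * q ∧ 0 < q ∧ q < 1 :=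
    ((eventually_rpow_sub_one_lt_mul (by positivity) ((lt_div_iff₀' hθb).2 hγ)).and
      (Ioo_mem_nhdsGT one_pos)).exists
  refine ⟨γ, q, hγ1, hq0, hq1, ?_⟩
  rw [div_mul_eq_mul_div, lt_div_iff₀' hθb] at hbq
  linarith

lemma tendsto_natCast_rpow_atTop_nhds_zero {s : ℝ} (hs : s < 0) :
    Tendsto (fun n : ℕ => (n : ℝ) ^ s) atTop (𝓝 0) := by
  simpa [Function.comp_def] using
    (tendsto_rpow_neg_atTop (neg_pos.2 hs)).comp tendsto_natCast_atTop_atTop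

section Probability

variable {Ω : Type*} [MeasurableSpace Ω] {μ : Measure Ω} {n k : ℕ}

lemma measurable_proc {A : ℕ → Ω → Finset (Fin n)} (hA : ∀ m, Measurable (A m))
    (x0 : Fin n → ℝ) (m : ℕ) : Measurable fun ω => proc k x0 A ω m := by
  obtain ⟨g, hg⟩ := exists_proc_eq_comp_history k x0 A m
  simp only [hg]
  exact (measurable_of_countable g).comp (measurable_pi_lambda _ fun j => hA j)

lemma indepFun_proc {A : ℕ → Ω → Finset (Fin n)} (hA : ∀ m, Measurable (A m))
    (hind : iIndepFun A μ) (x0 : Fin n → ℝ) (m : ℕ) :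
    IndepFun (fun ω => proc k x0 A ω m) (A m) μ := by
  obtain ⟨g, hg⟩ := exists_proc_eq_comp_history k x0 A m
  simp only [hg]
  exact (hind.indepFun_finset (range m) {m} (by simp) hA).comp (measurable_of_countable g)
    (measurable_pi_apply ⟨m, mem_singleton_self m⟩)

lemma integrable_sum_mem {B : Ω → Finset (Fin n)} (hBm : Measurable B) {Y : Ω → Fin n → ℝ}
    (hY : ∀ i, Integrable (fun ω => Y ω i) μ) : Integrable (fun ω => ∑ i ∈ B ω, Y ω i) μ := by
  have : (fun ω => ∑ i ∈ B ω, Y ω i)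
      = fun ω => ∑ i, {ω | i ∈ B ω}.indicator (fun ω => Y ω i) ω := by
    ext ω; simp [Set.indicator_apply, sum_ite_mem]
  rw [this]
  exact integrable_finsetSum _ fun i _ => (hY i).indicator (hBm (.of_discrete (s := {s | i ∈ s})))

def IsUniformSubsetOfCard (k : ℕ) (B : Ω → Finset (Fin n)) (μ : Measure Ω) : Prop :=
  ∀ s, μ (B ⁻¹' {s}) = if #s = k then ((n.choose k : ℝ≥0∞))⁻¹ else 0

namespace IsUniformSubsetOfCard

variable {B : Ω → Finset (Fin n)}

lemma ae_card_eq (hB : IsUniformSubsetOfCard k B μ) : ∀ᵐ ω ∂μ, #(B ω) = k := by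
  rw [ae_iff, show {ω | ¬#(B ω) = k} = ⋃ s ∈ {s : Finset (Fin n) | #s ≠ k}, B ⁻¹' {s} by
    ext; simp [eq_comm]]
  exact (measure_biUnion_null_iff (Set.to_countable _)).2 fun s hs => by rw [hB s, if_neg hs]

lemma measureReal_mem (hB : IsUniformSubsetOfCard k B μ) (hBm : Measurable B) (hk : 0 < k)
    (hkn : k ≤ n) (i : Fin n) : μ.real {ω | i ∈ B ω} = k / n := by
  have hset : {ω | i ∈ B ω} = B ⁻¹' ↑({s | i ∈ s} : Finset (Finset (Fin n))) := by ext; simp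
  rw [measureReal_def, hset, ← sum_measure_preimage_singleton _
    fun s _ => hBm (measurableSet_singleton s)]
  simp only [show ∀ s, μ (B ⁻¹' {s}) = _ from hB, sum_ite, sum_const_zero, add_zero, sum_const,
    filter_filter, card_filter_mem_and_card_eq hk i, nsmul_eq_mul, ENNReal.toReal_mul,
    ENNReal.toReal_inv, ENNReal.toReal_natCast]
  have hn : (n : ℝ) ≠ 0 := by exact_mod_cast (hk.trans_le hkn).ne'
  have hC : (n.choose k : ℝ) ≠ 0 := by exact_mod_cast (Nat.choose_pos hkn).ne'
  have := Nat.add_one_mul_choose_eq (n - 1) (k - 1)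
  rw [Nat.sub_add_cancel (hk.trans_le hkn), Nat.sub_add_cancel hk] at this
  field_simp
  exact_mod_cast (mul_comm _ _).trans this

lemma integral_sum_mem (hB : IsUniformSubsetOfCard k B μ) (hBm : Measurable B) (hk : 0 < k)
    (hkn : k ≤ n) {Y : Ω → Fin n → ℝ} (hY : ∀ i, Integrable (fun ω => Y ω i) μ)
    (hind : IndepFun Y B μ) :
    ∫ ω, ∑ i ∈ B ω, Y ω i ∂μ = k / n * ∫ ω, ∑ i, Y ω i ∂μ := by
  set mem : Fin n → Ω → ℝ := fun i ω => if i ∈ B ω then 1 else 0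
  have hmem : ∀ i, Measurable (mem i) := fun i =>
    (measurable_of_countable fun s : Finset (Fin n) => if i ∈ s then (1 : ℝ) else 0).comp hBm
  have hint : ∀ i, Integrable (fun ω => Y ω i * mem i ω) μ := fun i =>
    (hY i).mul_bdd (hmem i).aestronglyMeasurable (c := 1)
      (ae_of_all _ fun ω => by unfold mem; split_ifs <;> simp)
  have hmul : ∀ i, ∫ ω, Y ω i * mem i ω ∂μ = k / n * ∫ ω, Y ω i ∂μ := fun i => by
    have hindi : IndepFun (fun ω => Y ω i) (mem i) μ :=
      hind.comp (measurable_pi_apply i) (measurable_of_countable fun s => if i ∈ s then 1 else 0)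
    have hprob : ∫ ω, mem i ω ∂μ = k / n := by
      have hs : MeasurableSet {ω | i ∈ B ω} := hBm (.of_discrete (s := {s | i ∈ s}))
      rw [← hB.measureReal_mem hBm hk hkn i, ← integral_indicator_one hs]
      simp only [mem, Set.indicator_apply, Set.mem_ofPred_eq, Pi.one_apply]
    rw [← hprob, mul_comm]
    exact hindi.integral_mul_eq_mul_integral (hY i).aestronglyMeasurable
      (hmem i).aestronglyMeasurable
  calc ∫ ω, ∑ i ∈ B ω, Y ω i ∂μ = ∫ ω, ∑ i, Y ω i * mem i ω ∂μ := by
        simp only [mem, mul_ite, mul_one, mul_zero, sum_ite_mem, univ_inter]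
    _ = k / n * ∫ ω, ∑ i, Y ω i ∂μ := by
        rw [integral_finsetSum _ fun i _ => hint i, integral_finsetSum _ fun i _ => hY i,
          mul_sum]
        simp only [hmul]

end IsUniformSubsetOfCard

section RandomAveraging

variable {A : ℕ → Ω → Finset (Fin n)} {x0 : Fin n → ℝ} {p : ℝ}

lemma ae_proc_mem_stdSimplex (hunif : ∀ m, IsUniformSubsetOfCard k (A m) μ) (hk : 0 < k)
    (hx0 : x0 ∈ stdSimplex ℝ (Fin n)) :
    ∀ᵐ ω ∂μ, ∀ m, proc k x0 A ω m ∈ stdSimplex ℝ (Fin n) := by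
  filter_upwards [ae_all_iff.2 fun m => (hunif m).ae_card_eq] with ω hω m
  exact proc_mem_stdSimplex hk hx0 hω m

lemma integrable_rpow_abs_proc [IsFiniteMeasure μ] (hA : ∀ m, Measurable (A m))
    (hunif : ∀ m, IsUniformSubsetOfCard k (A m) μ) (hk : 0 < k) (hx0 : x0 ∈ stdSimplex ℝ (Fin n))
    (hp : 0 ≤ p) (m : ℕ) (i : Fin n) : Integrable (fun ω => |proc k x0 A ω m i| ^ p) μ := by
  refine .of_bound ((measurable_pi_apply i).comp ((measurable_rpow_abs p).comp
    (measurable_proc hA x0 m))).aestronglyMeasurable 1 ?_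
  filter_upwards [ae_proc_mem_stdSimplex hunif hk hx0] with ω hω
  have := mem_Icc_of_mem_stdSimplex (hω m) i
  rw [norm_of_nonneg (by positivity), abs_of_nonneg this.1]
  exact rpow_le_one this.1 this.2 hp

lemma integral_rpowSum_proc_succ_le [IsFiniteMeasure μ] (hA : ∀ m, Measurable (A m))
    (hind : iIndepFun A μ)
    (hunif : ∀ m, IsUniformSubsetOfCard k (A m) μ) (hk : 0 < k) (hkn : k ≤ n)
    (hx0 : x0 ∈ stdSimplex ℝ (Fin n)) (hp0 : 0 < p) (hp1 : p ≤ 1) (m : ℕ) :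
    ∫ ω, rpowSum p (proc k x0 A ω (m + 1)) ∂μ
      ≤ (1 + ((k : ℝ) ^ (1 - p) - 1) * k / n) * ∫ ω, rpowSum p (proc k x0 A ω m) ∂μ := by
  have hY := integrable_rpow_abs_proc hA hunif hk hx0 hp0.le m
  have hind' : IndepFun (fun ω i => |proc k x0 A ω m i| ^ p) (A m) μ :=
    (indepFun_proc hA hind x0 m).comp (measurable_rpow_abs p) measurable_id
  have hsum : ∀ m, Integrable (fun ω => rpowSum p (proc k x0 A ω m)) μ := fun m =>
    integrable_finsetSum _ fun i _ => integrable_rpow_abs_proc hA hunif hk hx0 hp0.le m i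
  calc ∫ ω, rpowSum p (proc k x0 A ω (m + 1)) ∂μ
      ≤ ∫ ω, (rpowSum p (proc k x0 A ω m)
          + ((k : ℝ) ^ (1 - p) - 1) * ∑ i ∈ A m ω, |proc k x0 A ω m i| ^ p) ∂μ := by
        refine integral_mono_ae (hsum (m + 1))
          ((hsum m).add ((integrable_sum_mem (hA m) hY).const_mul _)) ?_
        filter_upwards [(hunif m).ae_card_eq] with ω hω
        exact rpowSum_avgStep_le hk hω _ hp0 hp1
    _ = (1 + ((k : ℝ) ^ (1 - p) - 1) * k / n) * ∫ ω, rpowSum p (proc k x0 A ω m) ∂μ := by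
        rw [integral_add (hsum m) ((integrable_sum_mem (hA m) hY).const_mul _),
          integral_const_mul, (hunif m).integral_sum_mem (hA m) hk hkn hY hind']
        simp only [rpowSum]
        ring

lemma integral_rpowSum_proc_le [IsProbabilityMeasure μ] (hA : ∀ m, Measurable (A m))
    (hind : iIndepFun A μ)
    (hunif : ∀ m, IsUniformSubsetOfCard k (A m) μ) (hk : 0 < k) (hkn : k ≤ n)
    (hx0 : x0 ∈ stdSimplex ℝ (Fin n)) (hp0 : 0 < p) (hp1 : p ≤ 1) (m : ℕ) :
    ∫ ω, rpowSum p (proc k x0 A ω m) ∂μ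
      ≤ (1 + ((k : ℝ) ^ (1 - p) - 1) * k / n) ^ m * rpowSum p x0 := by
  induction m with
  | zero => simp [proc]
  | succ m ih =>
    have hgrowth : 0 ≤ 1 + ((k : ℝ) ^ (1 - p) - 1) * k / n := by
      have : (1 : ℝ) ≤ (k : ℝ) ^ (1 - p) := one_le_rpow (by exact_mod_cast hk) (by linarith)
      positivity
    calc ∫ ω, rpowSum p (proc k x0 A ω (m + 1)) ∂μ
        ≤ (1 + ((k : ℝ) ^ (1 - p) - 1) * k / n) * ∫ ω, rpowSum p (proc k x0 A ω m) ∂μ :=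
          integral_rpowSum_proc_succ_le hA hind hunif hk hkn hx0 hp0 hp1 m
      _ ≤ (1 + ((k : ℝ) ^ (1 - p) - 1) * k / n) ^ (m + 1) * rpowSum p x0 := by
          rw [pow_succ', mul_assoc]; gcongr

lemma measure_le_abs_sum_abs_sub_sub_two_le [IsProbabilityMeasure μ]
    (hA : ∀ m, Measurable (A m)) (hind : iIndepFun A μ)
    (hunif : ∀ m, IsUniformSubsetOfCard k (A m) μ) (hk : 0 < k) (hkn : k ≤ n)
    (hx0 : x0 ∈ stdSimplex ℝ (Fin n)) (hp0 : 0 < p) (hp1 : p ≤ 1) {a ε : ℝ} (ha : 0 < a)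
    (hε : 2 / (a * n) ≤ ε / 2) (m : ℕ) :
    μ {ω | ε ≤ |∑ i, |proc k x0 A ω m i - 1 / n| - 2|}
      ≤ ENNReal.ofReal (4 / ε * a ^ (1 - p) * (1 + ((k : ℝ) ^ (1 - p) - 1) * k / n) ^ m
          * rpowSum p x0) := by
  have hn : (0 : ℝ) < n := by exact_mod_cast hk.trans_le hkn
  have hε0 : 0 < ε := by linarith [show 0 < 2 / (a * n) by positivity]
  set t := ε / (4 * a ^ (1 - p))
  have hsub : {ω | ε ≤ |∑ i, |proc k x0 A ω m i - 1 / n| - 2|}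
      ≤ᵐ[μ] {ω | t ≤ rpowSum p (proc k x0 A ω m)} := by
    filter_upwards [ae_proc_mem_stdSimplex hunif hk hx0] with ω hω hmem
    exact div_le_rpowSum_of_le_abs_sum_abs_sub_inv_card_sub_two (hω m) ha hp0 hp1
      (by rwa [Fintype.card_fin]) (by rwa [Fintype.card_fin])
  have hmarkov := mul_meas_ge_le_integral_of_nonneg
    (ae_of_all μ fun ω => rpowSum_nonneg p (proc k x0 A ω m))
    (integrable_finsetSum _ fun i _ => integrable_rpow_abs_proc hA hunif hk hx0 hp0.le m i) t
  have hint := integral_rpowSum_proc_le hA hind hunif hk hkn hx0 hp0 hp1 (μ := μ) m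
  calc μ {ω | ε ≤ |∑ i, |proc k x0 A ω m i - 1 / n| - 2|}
      ≤ μ {ω | t ≤ rpowSum p (proc k x0 A ω m)} := measure_mono_ae hsub
    _ = ENNReal.ofReal (μ.real {ω | t ≤ rpowSum p (proc k x0 A ω m)}) := by
        rw [ofReal_measureReal]
    _ ≤ _ := by
        refine ENNReal.ofReal_le_ofReal ?_
        rw [← le_div_iff₀' (by positivity)] at hmarkov
        calc _ ≤ (∫ ω, rpowSum p (proc k x0 A ω m) ∂μ) / t := hmarkov
          _ ≤ (1 + ((k : ℝ) ^ (1 - p) - 1) * k / n) ^ m * rpowSum p x0 / t := by gcongr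
          _ = _ := by unfold t; field_simp

lemma measure_le_abs_sum_abs_sub_sub_two_le_of_single [IsProbabilityMeasure μ]
    (hA : ∀ m, Measurable (A m)) (hind : iIndepFun A μ)
    (hunif : ∀ m, IsUniformSubsetOfCard k (A m) μ) (hk : 1 < k) (hkn : k ≤ n) (i : Fin n)
    {θ γ q ε : ℝ} (hθ : 0 ≤ θ) (hq0 : 0 < q) (hq1 : q < 1)
    (hε : 2 / ((n : ℝ) ^ (-γ) * n) ≤ ε / 2) :
    μ {ω | ε ≤ |∑ j, |proc k (Pi.single i 1) A ω ⌊θ * n * log n⌋₊ j - 1 / n| - 2|}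
      ≤ ENNReal.ofReal (4 / ε * (n : ℝ) ^ (θ * (((k : ℝ) ^ q - 1) * k) - γ * q)) := by
  have hn : (0 : ℝ) < n := by exact_mod_cast (zero_lt_one.trans hk).trans_le hkn
  have hgrowth := one_add_div_pow_floor_le (c := ((k : ℝ) ^ q - 1) * k)
    (by nlinarith [one_le_rpow (Nat.one_le_cast.2 hk.le) hq0.le]) hθ (n := n)
    (by exact_mod_cast hn)
  refine (measure_le_abs_sum_abs_sub_sub_two_le hA hind hunif (zero_lt_one.trans hk) hkn
    (single_mem_stdSimplex ℝ i) (p := 1 - q) (by linarith) (by linarith)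
    (rpow_pos_of_pos hn _) hε _).trans (ENNReal.ofReal_le_ofReal ?_)
  rw [sub_sub_cancel, rpowSum_single (sub_pos.2 hq1).ne', mul_one, ← rpow_mul hn.le,
    show θ * (((k : ℝ) ^ q - 1) * k) - γ * q = -γ * q + θ * (((k : ℝ) ^ q - 1) * k) by ring,
    rpow_add hn]
  have hε0 : 0 < ε := by linarith [div_pos two_pos (mul_pos (rpow_pos_of_pos hn (-γ)) hn)]
  exact (mul_le_mul_of_nonneg_left hgrowth (by positivity)).trans_eq (by ring)

end RandomAveraging

end Probability

/-- For `θ < 1/(k log k)`, the `L¹` distance `T_n(⌊θ n log n⌋)` of the `k`-averaging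
process started from `(1,0,…,0)` converges to `2` in probability as `n → ∞`. -/
theorem averaging_L1_lower_cutoff
    (k : ℕ) (hk : 2 ≤ k)
    (Ω : ℕ → Type*) [∀ n, MeasurableSpace (Ω n)]
    (μ : ∀ n, Measure (Ω n)) [∀ n, IsProbabilityMeasure (μ n)]
    (A : ∀ n, ℕ → Ω n → Finset (Fin n))
    (hmeas : ∀ n, k < n → ∀ m, Measurable (A n m))
    (hindep : ∀ n, k < n → iIndepFun (A n) (μ n))
    (hunif : ∀ n, k < n → ∀ (m : ℕ) (s : Finset (Fin n)),
      μ n (A n m ⁻¹' {s}) = if s.card = k then ((n.choose k : ENNReal))⁻¹ else 0)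
    (θ : ℝ) (hθ0 : 0 < θ) (hθ : θ < 1 / (k * Real.log k)) :
    ∀ ε > 0, Tendsto
      (fun n => μ n {ω |
        ε ≤ |(∑ i, |proc k (fun i : Fin n => if i.val = 0 then (1 : ℝ) else 0) (A n) ω
                (⌊θ * n * Real.log n⌋₊) i - 1 / n|) - 2|})
      atTop (nhds 0) := by
  intro ε hε
  have hk1 : (1 : ℝ) < k := by exact_mod_cast hk
  rw [lt_div_iff₀ (by have := log_pos hk1; positivity), ← mul_assoc] at hθ
  obtain ⟨γ, q, hγ, hq0, hq1, hd⟩ := exists_cutoff_exponents hk1 hθ0 hθ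
  have hsmall : ∀ᶠ n : ℕ in atTop, 2 / ((n : ℝ) ^ (-γ) * n) ≤ ε / 2 := by
    refine (((tendsto_natCast_rpow_atTop_nhds_zero (by linarith : γ - 1 < 0)).const_mul 2).congr'
      ?_).eventually (ge_mem_nhds (by linarith : 2 * 0 < ε / 2))
    filter_upwards [eventually_gt_atTop 0] with n hn
    rw [div_eq_mul_inv, ← rpow_add_one (Nat.cast_ne_zero.2 hn.ne'), ← rpow_neg (Nat.cast_nonneg n)]
    ring_nf
  have hlim := ENNReal.tendsto_ofReal
    ((tendsto_natCast_rpow_atTop_nhds_zero (sub_neg.2 hd)).const_mul (4 / ε))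
  rw [mul_zero, ENNReal.ofReal_zero] at hlim
  refine tendsto_of_tendsto_of_tendsto_of_le_of_le' tendsto_const_nhds hlim
    (.of_forall fun _ => zero_le) ?_
  filter_upwards [eventually_gt_atTop k, hsmall] with n hkn hn
  have hx0 : (fun i : Fin n => if i.val = 0 then (1 : ℝ) else 0) = Pi.single ⟨0, by omega⟩ 1 := by
    ext i; simp [Pi.single_apply, Fin.ext_iff]
  rw [hx0]
  exact measure_le_abs_sum_abs_sub_sub_two_le_of_single (hmeas n hkn) (hindep n hkn) (hunif n hkn)
    (by omega) hkn.le _ hθ0.le hq0 hq1 hn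

end
end

section
/- Let n > k ≥ 2 be integers and let x ∈ ℝ^n satisfy ∑_{i=1}^n x_i = 0. Let A be a uniformly random k-element subset of {1, …, n}, and let y ∈ ℝ^n be obtained from x by setting y_i = (1/k)∑_{j∈A} x_j for i ∈ A and y_i = x_i otherwise. Then E[∑_{i=1}^n y_i²] = (1 − (k−1)/(n−1)) · ∑_{i=1}^n x_i². -/
/-!
Averaging the block `A`, `#A = k`, changes the sum of squares by
`(∑_{i ∈ A} x i)² / k - ∑_{i ∈ A} x i²`. Expanding the square and summing over all `k`-subsets,
every coordinate lies in `C(n-1, k-1)` of them and every ordered pair of distinct coordinates in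
`C(n-2, k-2)`. Since `∑ x = 0`, the off-diagonal products `x i * x j` add up to `-∑ x i²`, and
the identities `k C(n, k) = n C(n-1, k-1)` and `(k-1) C(n-1, k-1) = (n-1) C(n-2, k-2)` produce
the factor.
-/

open Finset

noncomputable section

namespace Finset

variable {ι α β M R : Type*}

theorem sq_sum_eq_sum_sq_add_sum_offDiag [DecidableEq α] [CommSemiring R] (s : Finset α)
    (f : α → R) :
    (∑ i ∈ s, f i) ^ 2 = ∑ i ∈ s, f i ^ 2 + ∑ p ∈ s.offDiag, f p.1 * f p.2 := by
  rw [sq, sum_mul_sum, ← sum_product', ← diag_union_offDiag,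
    sum_union (disjoint_diag_offDiag _), sum_diag]
  simp only [sq]

theorem sum_sum_eq_nsmul_sum_of_card_filter_mem [DecidableEq β] [AddCommMonoid M]
    {𝒜 : Finset ι} {F : ι → Finset β} {t : Finset β}
    (hF : ∀ A ∈ 𝒜, F A ⊆ t) {c : ℕ} (hc : ∀ p ∈ t, #{A ∈ 𝒜 | p ∈ F A} = c) (g : β → M) :
    ∑ A ∈ 𝒜, ∑ p ∈ F A, g p = c • ∑ p ∈ t, g p := by
  rw [sum_comm' (t' := t) (s' := fun p => {A ∈ 𝒜 | p ∈ F A})]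
  · rw [smul_sum]
    exact sum_congr rfl fun p hp => by rw [sum_const, hc p hp]
  · intro A p
    simp only [mem_filter]
    exact ⟨fun h => ⟨⟨h.1, h.2⟩, hF A h.1 h.2⟩, fun h => h.1⟩

theorem sum_powersetCard_sum [DecidableEq α] [AddCommMonoid M] (s : Finset α) (k : ℕ)
    (f : α → M) :
    ∑ A ∈ powersetCard (k + 1) s, ∑ i ∈ A, f i
      = (#s - 1).choose k • ∑ i ∈ s, f i := by
  refine sum_sum_eq_nsmul_sum_of_card_filter_mem (fun A hA => (mem_powersetCard.1 hA).1)
    (fun i hi => ?_) f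
  simpa [singleton_subset_iff] using
    card_filter_powersetCard_subset {i} s (k + 1) (singleton_subset_iff.2 hi) (by simp)

theorem sum_powersetCard_sum_offDiag [DecidableEq α] [AddCommMonoid M] (s : Finset α) (k : ℕ)
    (g : α × α → M) :
    ∑ A ∈ powersetCard (k + 2) s, ∑ p ∈ A.offDiag, g p
      = (#s - 2).choose k • ∑ p ∈ s.offDiag, g p := by
  refine sum_sum_eq_nsmul_sum_of_card_filter_mem
    (fun A hA => offDiag_mono (mem_powersetCard.1 hA).1) (fun p hp => ?_) g
  obtain ⟨hp₁, hp₂, hne⟩ := mem_offDiag.1 hp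
  have hsub : ({p.1, p.2} : Finset α) ⊆ s := by simp [insert_subset_iff, hp₁, hp₂]
  rw [filter_congr (q := ({p.1, p.2} ⊆ ·)) fun A _ => by simp [insert_subset_iff, hne],
    card_filter_powersetCard_subset _ _ _ hsub (by rw [card_pair hne]; omega), card_pair hne,
    add_tsub_cancel_right]

theorem sum_powersetCard_sq_sum [DecidableEq α] [CommSemiring R] (s : Finset α) (k : ℕ)
    (f : α → R) :
    ∑ A ∈ powersetCard (k + 2) s, (∑ i ∈ A, f i) ^ 2
      = (#s - 1).choose (k + 1) • ∑ i ∈ s, f i ^ 2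
        + (#s - 2).choose k • ∑ p ∈ s.offDiag, f p.1 * f p.2 := by
  simp only [sq_sum_eq_sum_sq_add_sum_offDiag, sum_add_distrib]
  rw [sum_powersetCard_sum_offDiag, ← sum_powersetCard_sum]

end Finset

theorem sum_sq_avgStep {n k : ℕ} {A : Finset (Fin n)} (hA : #A = k) (x : Fin n → ℝ) :
    ∑ i, avgStep k A x i ^ 2
      = ∑ i, x i ^ 2 - ∑ i ∈ A, x i ^ 2 + (∑ i ∈ A, x i) ^ 2 / k := by
  have hsplit (f : Fin n → ℝ) : ∑ i, f i = ∑ i ∈ A, f i + ∑ i ∈ Aᶜ, f i :=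
    (sum_add_sum_compl A f).symm
  rw [hsplit, hsplit (fun i => x i ^ 2)]
  have hin : ∑ i ∈ A, avgStep k A x i ^ 2 = (∑ i ∈ A, x i) ^ 2 / k := by
    rw [sum_congr rfl fun i hi => by rw [avgStep, if_pos hi], sum_const, hA, nsmul_eq_mul]
    rcases eq_or_ne (k : ℝ) 0 with hk | hk
    · simp [hk]
    · field_simp
  have hout : ∑ i ∈ Aᶜ, avgStep k A x i ^ 2 = ∑ i ∈ Aᶜ, x i ^ 2 :=
    sum_congr rfl fun i hi => by rw [avgStep, if_neg (mem_compl.1 hi)]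
  rw [hin, hout]
  ring

theorem Nat.cast_choose_succ_succ {K : Type*} [Field K] [CharZero K] (n k : ℕ) :
    ((n + 1).choose (k + 1) : K) = (n + 1) * n.choose k / (k + 1) := by
  rw [eq_div_iff (Nat.cast_add_one_ne_zero k)]
  exact_mod_cast (Nat.add_one_mul_choose_eq n k).symm

/-- For a mean-zero vector `x`, averaging a uniformly random `k`-subset of the
coordinates contracts the expected sum of squares by the factor `1 - (k-1)/(n-1)`. -/
theorem averaging_expected_sq_sum_zero_mean
    (n k : ℕ) (hk : 2 ≤ k) (hn : k < n)
    (x : Fin n → ℝ) (hx : ∑ i, x i = 0) :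
    (∑ A ∈ powersetCard k (univ : Finset (Fin n)), ∑ i, (avgStep k A x i) ^ 2)
        / (n.choose k : ℝ)
      = (1 - ((k : ℝ) - 1) / ((n : ℝ) - 1)) * ∑ i, (x i) ^ 2 := by
  obtain ⟨m, rfl⟩ : ∃ m, k = m + 2 := ⟨k - 2, by omega⟩
  obtain ⟨l, rfl⟩ : ∃ l, n = l + 2 := ⟨n - 2, by omega⟩
  have hoff : ∑ q ∈ (univ : Finset (Fin (l + 2))).offDiag, x q.1 * x q.2 = -∑ i, x i ^ 2 := by
    have := sq_sum_eq_sum_sq_add_sum_offDiag univ x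
    rw [hx] at this
    linear_combination -this
  rw [sum_congr rfl fun A hA => sum_sq_avgStep (mem_powersetCard.1 hA).2 x, sum_add_distrib,
    sum_sub_distrib, ← sum_div, sum_powersetCard_sq_sum, sum_powersetCard_sum (k := m + 1),
    sum_const, hoff, card_powersetCard, card_univ, Fintype.card_fin]
  have hN : (l.choose m : ℝ) ≠ 0 := by exact_mod_cast (Nat.choose_pos (by omega)).ne'
  simp only [nsmul_eq_mul, Nat.reduceSubDiff]
  rw [Nat.cast_choose_succ_succ (l + 1) (m + 1), Nat.cast_choose_succ_succ l m]
  push_cast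
  rw [show (l : ℝ) + 2 - 1 = l + 1 by ring]
  field_simp
  ring

end
end

section
/- Let n > k ≥ 2 be integers and let x ∈ ℝ^n be any vector, with mean x̄ = (1/n)∑_{i=1}^n x_i. Let A be a uniformly random k-element subset of {1, …, n}, and let y ∈ ℝ^n be obtained from x by setting y_i = (1/k)∑_{j∈A} x_j for i ∈ A and y_i = x_i otherwise. Then E[∑_{i=1}^n (y_i − x̄)²] = (1 − (k−1)/(n−1)) · ∑_{i=1}^n (x_i − x̄)². -/
/-! Averaging the block `A` keeps the sum of `x` over `A`, so the squared deviation from `x̄`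
drops exactly by the scatter inside the block, `(1/2k) ∑_{i,j ∈ A} (x_i - x_j)²`. Each pair
`i ≠ j` lies in `C(n-2, k-2)` of the `C(n, k)` blocks, and
`∑_{i,j} (x_i - x_j)² = 2n ∑ (x_i - x̄)²`; since `C(n-2, k-2) / C(n, k) = k(k-1) / (n(n-1))`,
the expected drop is `(k-1)/(n-1)` of the total. -/

open Finset

noncomputable section

theorem Nat.choose_mul_descFactorial {n k s : ℕ} (hsk : s ≤ k) :
    n.choose k * k.descFactorial s = n.descFactorial s * (n - s).choose (k - s) := by
  simp only [descFactorial_eq_factorial_mul_choose]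
  rw [mul_left_comm, choose_mul hsk, mul_assoc]

theorem Finset.sum_sum_sub_sq {ι R : Type*} [CommRing R] (s : Finset ι) (f : ι → R) :
    ∑ i ∈ s, ∑ j ∈ s, (f i - f j) ^ 2 = 2 * (#s * ∑ i ∈ s, f i ^ 2 - (∑ i ∈ s, f i) ^ 2) := by
  simp only [sub_sq, sum_add_distrib, sum_sub_distrib, sum_const, nsmul_eq_mul, ← mul_sum,
    ← sum_mul]
  ring

theorem Finset.sum_sum_sub_sq_eq_card_mul_sum_sq_sub_mean {ι K : Type*} [Field K] [CharZero K]
    (s : Finset ι) (f : ι → K) :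
    ∑ i ∈ s, ∑ j ∈ s, (f i - f j) ^ 2 = 2 * #s * ∑ i ∈ s, (f i - (∑ j ∈ s, f j) / #s) ^ 2 := by
  rcases s.eq_empty_or_nonempty with rfl | hs
  · simp
  have hs0 : (#s : K) ≠ 0 := by exact_mod_cast hs.card_ne_zero
  rw [sum_sum_sub_sq]
  simp only [sub_sq, sum_add_distrib, sum_sub_distrib, sum_const, nsmul_eq_mul, ← mul_sum,
    ← sum_mul]
  field_simp
  ring

theorem Finset.sum_powersetCard_sum_sum {α M : Type*} [DecidableEq α] [AddCommMonoid M]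
    {s : Finset α} {k : ℕ} (hk : 2 ≤ k) (g : α → α → M) (hg : ∀ i, g i i = 0) :
    ∑ A ∈ powersetCard k s, ∑ i ∈ A, ∑ j ∈ A, g i j
      = (#s - 2).choose (k - 2) • ∑ i ∈ s, ∑ j ∈ s, g i j := by
  have hrestrict : ∀ A ∈ powersetCard k s, ∑ i ∈ A, ∑ j ∈ A, g i j
      = ∑ i ∈ s, ∑ j ∈ s, if {i, j} ⊆ A then g i j else 0 := by
    intro A hA
    have hAs := (mem_powersetCard.mp hA).1
    simp only [insert_subset_iff, singleton_subset_iff, ite_and, sum_ite_irrel, sum_const_zero,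
      sum_ite_mem, inter_eq_right.mpr hAs]
  have hpair : ∀ i ∈ s, ∀ j ∈ s, i ≠ j →
      #{A ∈ powersetCard k s | {i, j} ⊆ A} = (#s - 2).choose (k - 2) := by
    intro i hi j hj hij
    rw [card_filter_powersetCard_subset _ _ _ (by simp [insert_subset_iff, hi, hj])
      (by rwa [card_pair hij]), card_pair hij]
  rw [sum_congr rfl hrestrict, sum_comm, smul_sum]
  refine sum_congr rfl fun i hi => ?_
  rw [sum_comm, smul_sum]
  refine sum_congr rfl fun j hj => ?_
  rw [← sum_filter, sum_const]
  obtain rfl | hij := eq_or_ne i j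
  · simp [hg]
  · rw [hpair i hi j hj hij]

theorem sum_sq_avgStep_sub {n k : ℕ} {A : Finset (Fin n)} (hA : #A = k) (x : Fin n → ℝ) (m : ℝ) :
    ∑ i, (avgStep k A x i - m) ^ 2
      = ∑ i, (x i - m) ^ 2 - (∑ i ∈ A, ∑ j ∈ A, (x i - x j) ^ 2) / (2 * k) := by
  have hout : ∑ i ∈ Aᶜ, (avgStep k A x i - m) ^ 2 = ∑ i ∈ Aᶜ, (x i - m) ^ 2 :=
    sum_congr rfl fun i hi => by rw [avgStep, if_neg (mem_compl.mp hi)]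
  have hin : ∑ i ∈ A, (avgStep k A x i - m) ^ 2 = k * ((∑ j ∈ A, x j) / k - m) ^ 2 := by
    rw [sum_congr rfl fun i hi => by rw [avgStep, if_pos hi], sum_const, hA, nsmul_eq_mul]
  rw [← sum_add_sum_compl A, ← sum_add_sum_compl A fun i => (x i - m) ^ 2, hout, hin,
    sum_sum_sub_sq, hA]
  rcases Nat.eq_zero_or_pos k with rfl | hk
  · simp_all
  have hk0 : (k : ℝ) ≠ 0 := by positivity
  simp only [sub_sq, sum_add_distrib, sum_sub_distrib, sum_const, nsmul_eq_mul, ← mul_sum,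
    ← sum_mul, hA]
  field_simp
  ring

/-- For an arbitrary vector `x` with mean `x̄`, averaging a uniformly random `k`-subset
of the coordinates contracts the expected sum of squared deviations from the mean by
the factor `1 - (k-1)/(n-1)`. -/
theorem averaging_expected_sq_sum_about_mean
    (n k : ℕ) (hk : 2 ≤ k) (hn : k < n)
    (x : Fin n → ℝ) :
    (∑ A ∈ powersetCard k (univ : Finset (Fin n)),
        ∑ i, (avgStep k A x i - (∑ j, x j) / n) ^ 2) / (n.choose k : ℝ)
      = (1 - ((k : ℝ) - 1) / ((n : ℝ) - 1)) * ∑ i, (x i - (∑ j, x j) / n) ^ 2 := by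
  set Q := ∑ i, (x i - (∑ j, x j) / n) ^ 2
  have hk0 : (k : ℝ) ≠ 0 := by positivity
  have hn1 : (n : ℝ) - 1 ≠ 0 := sub_ne_zero.mpr (by exact_mod_cast (by omega : n ≠ 1))
  have hC : (n.choose k : ℝ) ≠ 0 := by exact_mod_cast (Nat.choose_pos hn.le).ne'
  have hchoose : (n.choose k : ℝ) * (k * (k - 1)) = n * (n - 1) * (n - 2).choose (k - 2) := by
    simpa only [Nat.cast_mul, Nat.cast_descFactorial_two] using
      congrArg (Nat.cast (R := ℝ)) (Nat.choose_mul_descFactorial (n := n) hk)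
  have hsum : ∑ A ∈ powersetCard k (univ : Finset (Fin n)),
      ∑ i, (avgStep k A x i - (∑ j, x j) / n) ^ 2
        = n.choose k * Q - (n - 2).choose (k - 2) * (2 * n * Q) / (2 * k) := by
    rw [sum_congr rfl fun A hA => sum_sq_avgStep_sub (mem_powersetCard.mp hA).2 x _,
      sum_sub_distrib, ← sum_div, sum_powersetCard_sum_sum hk _ fun i => by simp,
      sum_sum_sub_sq_eq_card_mul_sum_sq_sub_mean]
    simp [Q]
  rw [hsum]
  field_simp
  linear_combination Q * hchoose

end
end
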